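/- arXiv:2602.16596 — 2 statements merged into one kernel-verified Lean document; each statement's English description precedes it below -/
import Mathlib

section
/- Let μ, σ² be real with σ > 0, n ≥ 2 an integer, and z* a real target. Let m₀ = ((τ-1)/τ)·μ̂_{τ-1} + μ/τ, v₀ = σ²/(τ²n), m₁ = ((τ-1)/τ)·μ̂_{τ-1} + ((n-1)μ + z*)/(τn), v₁ = (n-1)σ²/(τ²n²). Then the log ratio of the Gaussian density N(m₁, v₁) to N(m₀, v₀), evaluated at μ̂_τ and expressed in terms of X̄_τ := τ·μ̂_τ − (τ−1)·μ̂_{τ−1}, equals −(1/2)·log((n−1)/n) − (n/(2(n−1)σ²))·(X̄_τ − μ)² + ((z* − μ)n/((n−1)σ²))·(X̄_τ − μ) − (z* − μ)²/(2(n−1)σ²). -/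
open Real

/-- Univariate Gaussian density with mean `m` and variance `v`. -/
noncomputable def gaussPDF (m v x : ℝ) : ℝ :=
  (Real.sqrt (2 * Real.pi * v))⁻¹ * Real.exp (-(x - m) ^ 2 / (2 * v))

/-- Log likelihood ratio of the SeMI* test for the empirical mean mechanism. -/
theorem semi_star_log_likelihood_ratio
    (μ σ zstar : ℝ) (hσ : 0 < σ) (n τ : ℕ) (hn : 2 ≤ n) (hτ : 1 ≤ τ)
    (μhatPrev μhatτ : ℝ) (m₀ v₀ m₁ v₁ Xbar : ℝ)
    (hm₀ : m₀ = (((τ : ℝ) - 1) / τ) * μhatPrev + μ / τ)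
    (hv₀ : v₀ = σ ^ 2 / ((τ : ℝ) ^ 2 * n))
    (hm₁ : m₁ = (((τ : ℝ) - 1) / τ) * μhatPrev + (((n : ℝ) - 1) * μ + zstar) / ((τ : ℝ) * n))
    (hv₁ : v₁ = ((n : ℝ) - 1) * σ ^ 2 / ((τ : ℝ) ^ 2 * (n : ℝ) ^ 2))
    (hX : Xbar = (τ : ℝ) * μhatτ - ((τ : ℝ) - 1) * μhatPrev) :
    Real.log (gaussPDF m₁ v₁ μhatτ / gaussPDF m₀ v₀ μhatτ)
      = -(1 / 2) * Real.log (((n : ℝ) - 1) / n)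
        - ((n : ℝ) / (2 * ((n : ℝ) - 1) * σ ^ 2)) * (Xbar - μ) ^ 2
        + ((zstar - μ) * n / (((n : ℝ) - 1) * σ ^ 2)) * (Xbar - μ)
        - (zstar - μ) ^ 2 / (2 * ((n : ℝ) - 1) * σ ^ 2) := by
  have hτpos : (0:ℝ) < τ := by exact_mod_cast hτ
  have hnpos : (0:ℝ) < n := by positivity
  have hn1 : (0:ℝ) < (n:ℝ) - 1 := by
    have : (2:ℝ) ≤ n := by exact_mod_cast hn
    linarith
  have hσ2 : (0:ℝ) < σ ^ 2 := by positivity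
  have hv₀pos : 0 < v₀ := by rw [hv₀]; positivity
  have hv₁pos : 0 < v₁ := by rw [hv₁]; positivity
  have hpi := Real.pi_pos
  have hlogratio : Real.log (((n:ℝ) - 1) / n) = Real.log v₁ - Real.log v₀ := by
    rw [← Real.log_div hv₁pos.ne' hv₀pos.ne']
    congr 1
    rw [hv₀, hv₁]
    field_simp
  have hs₀ : 0 < Real.sqrt (2 * Real.pi * v₀) := Real.sqrt_pos.mpr (by positivity)
  have hs₁ : 0 < Real.sqrt (2 * Real.pi * v₁) := Real.sqrt_pos.mpr (by positivity)
  have hP₀ : gaussPDF m₀ v₀ μhatτ ≠ 0 := by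
    unfold gaussPDF; positivity
  have hP₁ : gaussPDF m₁ v₁ μhatτ ≠ 0 := by
    unfold gaussPDF; positivity
  rw [Real.log_div hP₁ hP₀]
  unfold gaussPDF
  rw [Real.log_mul (by positivity) (Real.exp_ne_zero _),
      Real.log_mul (by positivity) (Real.exp_ne_zero _),
      Real.log_exp, Real.log_exp, Real.log_inv, Real.log_inv,
      Real.log_sqrt (by positivity), Real.log_sqrt (by positivity),
      Real.log_mul (by positivity) hv₁pos.ne',
      Real.log_mul (by positivity) hv₀pos.ne',
      hlogratio]
  have key : -(μhatτ - m₁) ^ 2 / (2 * v₁) + (μhatτ - m₀) ^ 2 / (2 * v₀)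
      = - ((n : ℝ) / (2 * ((n : ℝ) - 1) * σ ^ 2)) * (Xbar - μ) ^ 2
        + ((zstar - μ) * n / (((n : ℝ) - 1) * σ ^ 2)) * (Xbar - μ)
        - (zstar - μ) ^ 2 / (2 * ((n : ℝ) - 1) * σ ^ 2) := by
    rw [hm₀, hm₁, hv₀, hv₁, hX]
    field_simp
    ring
  linear_combination key
end

section
/- Suppose under H₀ a random variable N is distributed as N(0, σ²/n) and the test statistic is S(N) = c₀ + c₁·N + c₂·N² with c₂ = −n/(2(n−1)σ²) < 0, c₁ = (z*−μ)·n/((n−1)σ²), c₀ = −(1/2)log((n−1)/n) − (z*−μ)²/(2(n−1)σ²). Let m* = (z*−μ)²/σ², a = √(m*·n), and for γ ≤ γ_max := (1/2)(m* − log((n−1)/n)) let b(γ) = √((n−1)(m* − log(1−1/n) − 2γ)). Then P(S(N) ≥ γ) = Φ(a + b(γ)) − Φ(a − b(γ)), where Φ is the standard normal CDF. Moreover if γ > γ_max then P(S(N) ≥ γ) = 0. -/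
/-!
Completing the square, `S x = γmax + c₂ (x - (z* - μ))²` with `c₂ < 0`, so `{γ ≤ S}` is
empty for `γ > γmax` and otherwise the interval of half-width `√(σ²/n) · b γ` centred at
`z* - μ`. Standardising `N` turns its probability into `Φ(x + b γ) - Φ(x - b γ)` with
`x = (z* - μ) / √(σ²/n)`, and the symmetry of `N(0, 1)` lets `x` be replaced by `|x| = a`.
-/

open Real ProbabilityTheory

/-- Standard normal CDF. -/
noncomputable def stdNormalCDF (x : ℝ) : ℝ :=
  ((gaussianReal 0 1) (Set.Iic x)).toReal

open MeasureTheory Set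
open scoped NNReal

lemma stdNormalCDF_eq_cdf (x : ℝ) : stdNormalCDF x = cdf (gaussianReal 0 1) x :=
  (cdf_eq_real _ x).symm

lemma stdNormalCDF_sub_stdNormalCDF {x y : ℝ} (hxy : x ≤ y) :
    stdNormalCDF y - stdNormalCDF x = (gaussianReal 0 1).real (Icc x y) := by
  have hIoc : Ioc x y =ᵐ[gaussianReal 0 1] Icc x y :=
    Ioc_ae_eq_Icc' (gaussianReal_absolutelyContinuous 0 one_ne_zero (measure_singleton x))
  rw [measureReal_def, ← measure_congr hIoc, ← measure_cdf (gaussianReal 0 1),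
    StieltjesFunction.measure_Ioc, stdNormalCDF_eq_cdf, stdNormalCDF_eq_cdf,
    ENNReal.toReal_ofReal (sub_nonneg.2 (monotone_cdf _ hxy))]

lemma gaussianReal_real_Icc_neg (v : ℝ≥0) (x y : ℝ) :
    (gaussianReal 0 v).real (Icc (-y) (-x)) = (gaussianReal 0 v).real (Icc x y) := by
  conv_lhs => rw [← neg_zero, ← gaussianReal_map_neg]
  rw [map_measureReal_apply measurable_neg measurableSet_Icc]
  congr 1
  ext z
  simp

lemma stdNormalCDF_abs_add_sub_stdNormalCDF_abs_sub (x : ℝ) {b : ℝ} (hb : 0 ≤ b) :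
    stdNormalCDF (|x| + b) - stdNormalCDF (|x| - b) =
      stdNormalCDF (x + b) - stdNormalCDF (x - b) := by
  rcases abs_cases x with ⟨hx, -⟩ | ⟨hx, -⟩
  · rw [hx]
  · rw [hx, stdNormalCDF_sub_stdNormalCDF (by linarith),
      stdNormalCDF_sub_stdNormalCDF (by linarith), ← gaussianReal_real_Icc_neg]
    congr 2 <;> ring

lemma gaussianReal_map_standardize (m : ℝ) {v : ℝ≥0} (hv : v ≠ 0) :
    (gaussianReal m v).map (fun x ↦ (x - m) / √v) = gaussianReal 0 1 := by
  have hsq : (.mk (√v ^ 2) (sq_nonneg _) : ℝ≥0) = v := NNReal.eq (sq_sqrt v.coe_nonneg)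
  have hcomp : (fun x ↦ (x - m) / √v) = (· / √v) ∘ (· - m) := rfl
  rw [hcomp, ← Measure.map_map (by fun_prop) (by fun_prop), gaussianReal_map_sub_const,
    gaussianReal_map_div_const, sub_self, zero_div, hsq, div_self hv]

lemma gaussianReal_real_Icc (m : ℝ) {v : ℝ≥0} (hv : v ≠ 0) {u w : ℝ} (huw : u ≤ w) :
    (gaussianReal m v).real (Icc u w) =
      stdNormalCDF ((w - m) / √v) - stdNormalCDF ((u - m) / √v) := by
  have hs : 0 < √(v : ℝ) := sqrt_pos.2 (by positivity)
  rw [stdNormalCDF_sub_stdNormalCDF (by gcongr), ← gaussianReal_map_standardize m hv,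
    map_measureReal_apply (by fun_prop) measurableSet_Icc]
  congr 1
  ext x
  simp only [mem_preimage, mem_Icc, div_le_div_iff_of_pos_right hs, sub_le_sub_iff_right]

lemma setOf_le_add_mul_sq_eq_Icc {c γ₀ γ r : ℝ} (d : ℝ) (hc : c < 0) (hr : 0 ≤ r)
    (hcr : c * r ^ 2 = γ - γ₀) :
    {x | γ ≤ γ₀ + c * (x - d) ^ 2} = Icc (d - r) (d + r) := by
  ext x
  calc γ ≤ γ₀ + c * (x - d) ^ 2 ↔ c * r ^ 2 ≤ c * (x - d) ^ 2 := by
        rw [hcr]; constructor <;> intro h <;> linarith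
    _ ↔ (x - d) ^ 2 ≤ r ^ 2 := mul_le_mul_left_of_neg hc
    _ ↔ |d - x| ≤ r := by rw [sq_le_sq, abs_sub_comm, abs_of_nonneg hr]
    _ ↔ x ∈ Icc (d - r) (d + r) := mem_Icc_iff_abs_le

lemma setOf_le_add_mul_sq_eq_empty {c γ₀ γ : ℝ} (d : ℝ) (hc : c ≤ 0) (hγ : γ₀ < γ) :
    {x | γ ≤ γ₀ + c * (x - d) ^ 2} = ∅ :=
  eq_empty_of_forall_notMem fun x (hx : γ ≤ γ₀ + c * (x - d) ^ 2) ↦ by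
    linarith [mul_nonpos_of_nonpos_of_nonneg hc (sq_nonneg (x - d))]

theorem gaussianReal_real_setOf_le_add_mul_sq (m : ℝ) {v : ℝ≥0} (hv : v ≠ 0)
    {c γ₀ γ : ℝ} (hc : c < 0) (hγ : γ ≤ γ₀) (d : ℝ) :
    (gaussianReal m v).real {x | γ ≤ γ₀ + c * (x - d) ^ 2} =
      stdNormalCDF (|d - m| / √v + √((γ - γ₀) / (c * v)))
        - stdNormalCDF (|d - m| / √v - √((γ - γ₀) / (c * v))) := by
  set β := √((γ - γ₀) / (c * v))
  have hs : 0 < √(v : ℝ) := sqrt_pos.2 (by positivity)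
  have hcv : c * v < 0 := mul_neg_of_neg_of_pos hc (by positivity)
  have hr0 : 0 ≤ √v * β := by positivity
  have hr : c * (√v * β) ^ 2 = γ - γ₀ := by
    rw [mul_pow, sq_sqrt v.coe_nonneg, sq_sqrt (div_nonneg_of_nonpos (by linarith) hcv.le)]
    field_simp [hc.ne]
  rw [setOf_le_add_mul_sq_eq_Icc d hc hr0 hr, gaussianReal_real_Icc m hv (by linarith),
    ← abs_of_pos hs, ← abs_div, abs_of_pos hs,
    stdNormalCDF_abs_add_sub_stdNormalCDF_abs_sub _ (sqrt_nonneg _)]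
  congr 2 <;> field_simp <;> ring

theorem semi_type_one_error_general
    (n : ℕ) (hn : 2 ≤ n) (σ μ zstar : ℝ) (hσ : 0 < σ)
    (c₀ c₁ c₂ mstar a γmax : ℝ)
    (hc₂ : c₂ = -(n : ℝ) / (2 * ((n : ℝ) - 1) * σ ^ 2))
    (hc₁ : c₁ = (zstar - μ) * n / (((n : ℝ) - 1) * σ ^ 2))
    (hc₀ : c₀ = -(1 / 2) * Real.log (((n : ℝ) - 1) / n)
        - (zstar - μ) ^ 2 / (2 * ((n : ℝ) - 1) * σ ^ 2))
    (hm : mstar = (zstar - μ) ^ 2 / σ ^ 2)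
    (ha : a = Real.sqrt (mstar * n))
    (hγmax : γmax = (1 / 2) * (mstar - Real.log (((n : ℝ) - 1) / n)))
    (S : ℝ → ℝ) (hS : ∀ x, S x = c₀ + c₁ * x + c₂ * x ^ 2)
    (b : ℝ → ℝ)
    (hb : ∀ γ, b γ = Real.sqrt (((n : ℝ) - 1) * (mstar - Real.log (1 - 1 / n) - 2 * γ)))
    (P : MeasureTheory.Measure ℝ)
    (hP : P = gaussianReal 0 ((σ ^ 2 / n).toNNReal)) :
    (∀ γ : ℝ, γ ≤ γmax →
        (P {x | γ ≤ S x}).toReal = stdNormalCDF (a + b γ) - stdNormalCDF (a - b γ))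
      ∧ (∀ γ : ℝ, γmax < γ → P {x | γ ≤ S x} = 0) := by
  have hn1 : (0 : ℝ) < n - 1 := by
    have : (2 : ℝ) ≤ n := by exact_mod_cast hn
    linarith
  have hv : ((σ ^ 2 / n).toNNReal : ℝ) = σ ^ 2 / n := coe_toNNReal _ (by positivity)
  have hv0 : (σ ^ 2 / n).toNNReal ≠ 0 := by rw [← NNReal.coe_ne_zero, hv]; positivity
  have hS' : S = fun x ↦ γmax + c₂ * (x - (zstar - μ)) ^ 2 := by
    funext x; rw [hS, hc₀, hc₁, hc₂, hγmax, hm]; field_simp; ring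
  have hc₂neg : c₂ < 0 := by
    rw [hc₂]; exact div_neg_of_neg_of_pos (by linarith) (by positivity)
  have ha' : a = |zstar - μ - 0| / √((σ ^ 2 / n).toNNReal) := by
    rw [ha, hm, hv, sub_zero, ← sqrt_sq_eq_abs, ← sqrt_div' _ (by positivity)]
    congr 1; field_simp
  have hb' : ∀ γ, b γ = √((γ - γmax) / (c₂ * (σ ^ 2 / n).toNNReal)) := by
    intro γ
    rw [hb, hv, hc₂, hγmax, show (1 : ℝ) - 1 / n = (n - 1) / n by field_simp]
    congr 1; field_simp; ring
  subst hP
  refine ⟨fun γ hγ ↦ ?_, fun γ hγ ↦ ?_⟩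
  · rw [hS', ← measureReal_def, gaussianReal_real_setOf_le_add_mul_sq 0 hv0 hc₂neg hγ, ha',
      hb']
  · rw [hS', setOf_le_add_mul_sq_eq_empty _ hc₂neg.le hγ, measure_empty]

/-- Type I error of the sequential membership inference test (Lemma 3.4). -/
theorem semi_type_one_error
    (n : ℕ) (hn : 2 ≤ n) (σ μ zstar : ℝ) (hσ : 0 < σ) (hz : zstar ≠ μ)
    (c₀ c₁ c₂ mstar a γmax : ℝ)
    (hc₂ : c₂ = -(n : ℝ) / (2 * ((n : ℝ) - 1) * σ ^ 2))
    (hc₁ : c₁ = (zstar - μ) * n / (((n : ℝ) - 1) * σ ^ 2))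
    (hc₀ : c₀ = -(1 / 2) * Real.log (((n : ℝ) - 1) / n)
        - (zstar - μ) ^ 2 / (2 * ((n : ℝ) - 1) * σ ^ 2))
    (hm : mstar = (zstar - μ) ^ 2 / σ ^ 2)
    (ha : a = Real.sqrt (mstar * n))
    (hγmax : γmax = (1 / 2) * (mstar - Real.log (((n : ℝ) - 1) / n)))
    (S : ℝ → ℝ) (hS : ∀ x, S x = c₀ + c₁ * x + c₂ * x ^ 2)
    (b : ℝ → ℝ)
    (hb : ∀ γ, b γ = Real.sqrt (((n : ℝ) - 1) * (mstar - Real.log (1 - 1 / n) - 2 * γ)))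
    (P : MeasureTheory.Measure ℝ)
    (hP : P = gaussianReal 0 ((σ ^ 2 / n).toNNReal)) :
    (∀ γ : ℝ, γ ≤ γmax →
        (P {x | γ ≤ S x}).toReal = stdNormalCDF (a + b γ) - stdNormalCDF (a - b γ))
      ∧ (∀ γ : ℝ, γmax < γ → P {x | γ ≤ S x} = 0) :=
  semi_type_one_error_general n hn σ μ zstar hσ c₀ c₁ c₂ mstar a γmax hc₂ hc₁ hc₀ hm ha hγmax S hS b
    hb P hP
end
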